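/- With f(x) = (q − q⁻¹x)/(q⁻¹ − qx) and the q-symmetrization operator Sym(G)(t₁,…,tₙ) = Σ_{σ∈Sₙ} γ_σ(t₁,…,tₙ) · G(t_{σ(1)},…,t_{σ(n)}), where γ_σ(t̄) = ∏_{ℓ<ℓ', σ(ℓ)>σ(ℓ')} f(t_{σ(ℓ)}/t_{σ(ℓ')}), one has Sym(Sym(G)) = n! · Sym(G) for every rational function G ∈ ℚ(q,t₁,…,tₙ). -/

import Mathlib

open Finset

/-- The field of rational functions `ℚ(q, t₁,…,tₙ)`. -/
abbrev Kqt (n : ℕ) : Type := FractionRing (MvPolynomial (Option (Fin n)) ℚ)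

noncomputable def qgen (n : ℕ) : Kqt n :=
  algebraMap (MvPolynomial (Option (Fin n)) ℚ) (Kqt n) (MvPolynomial.X none)

noncomputable def tgen (n : ℕ) (i : Fin n) : Kqt n :=
  algebraMap (MvPolynomial (Option (Fin n)) ℚ) (Kqt n) (MvPolynomial.X (some i))

/-- `f(x) = (q − q⁻¹x)/(q⁻¹ − qx)`. -/
noncomputable def fq {n : ℕ} (q x : Kqt n) : Kqt n := (q - q⁻¹ * x) / (q⁻¹ - q * x)

/-- `γ_σ(t₁,…,tₙ) = ∏_{ℓ<ℓ', σ(ℓ)>σ(ℓ')} f(t_{σ(ℓ)}/t_{σ(ℓ')})`, product over the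
inversions of `σ`. -/
noncomputable def gammaP {n : ℕ} (q : Kqt n) (σ : Equiv.Perm (Fin n))
    (t : Fin n → Kqt n) : Kqt n :=
  ∏ p ∈ Finset.univ.filter (fun p : Fin n × Fin n => p.1 < p.2 ∧ σ p.2 < σ p.1),
    fq q (t (σ p.1) / t (σ p.2))

-- auxiliary lemmas
lemma inj_map (n : ℕ) :
    Function.Injective (algebraMap (MvPolynomial (Option (Fin n)) ℚ) (Kqt n)) :=
  IsFractionRing.injective _ _

lemma map_ne_zero' {n : ℕ} {p : MvPolynomial (Option (Fin n)) ℚ} (hp : p ≠ 0) :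
    algebraMap (MvPolynomial (Option (Fin n)) ℚ) (Kqt n) p ≠ 0 := by
  intro h
  exact hp (inj_map n (by simpa using h))

lemma qgen_ne_zero (n : ℕ) : qgen n ≠ 0 :=
  map_ne_zero' (MvPolynomial.X_ne_zero _)

lemma tgen_ne_zero (n : ℕ) (i : Fin n) : tgen n i ≠ 0 :=
  map_ne_zero' (MvPolynomial.X_ne_zero _)

lemma poly_ne {n : ℕ} (a b : Fin n) :
    (MvPolynomial.X (some b) - MvPolynomial.X none ^ 2 * MvPolynomial.X (some a) :
      MvPolynomial (Option (Fin n)) ℚ) ≠ 0 := by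
  intro h
  have := congrArg (MvPolynomial.eval (fun o => Option.elim o 0 (fun _ => 1))) h
  simp at this

lemma denom_ne {n : ℕ} (a b : Fin n) :
    (qgen n)⁻¹ - qgen n * (tgen n a / tgen n b) ≠ 0 := by
  have hq := qgen_ne_zero n
  have ha := tgen_ne_zero n a
  have hb := tgen_ne_zero n b
  have key : tgen n b - (qgen n) ^ 2 * tgen n a ≠ 0 := by
    have : tgen n b - (qgen n) ^ 2 * tgen n a =
        algebraMap (MvPolynomial (Option (Fin n)) ℚ) (Kqt n)
          (MvPolynomial.X (some b) - MvPolynomial.X none ^ 2 * MvPolynomial.X (some a)) := by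
      simp [tgen, qgen, map_sub, map_mul, map_pow]
    rw [this]
    exact map_ne_zero' (poly_ne a b)
  have heq : (qgen n)⁻¹ - qgen n * (tgen n a / tgen n b) =
      (tgen n b - (qgen n) ^ 2 * tgen n a) / (qgen n * tgen n b) := by
    field_simp
  rw [heq]
  exact div_ne_zero key (mul_ne_zero hq hb)

lemma fq_mul {n : ℕ} (a b : Fin n) :
    fq (qgen n) (tgen n a / tgen n b) * fq (qgen n) (tgen n b / tgen n a) = 1 := by
  have hq := qgen_ne_zero n
  have ha := tgen_ne_zero n a
  have hb := tgen_ne_zero n b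
  have d1 := denom_ne a b
  have d2 := denom_ne b a
  unfold fq
  rw [div_mul_div_comm, div_eq_one_iff_eq (mul_ne_zero d1 d2)]
  field_simp
  ring

def srt {n : ℕ} (σ : Equiv.Perm (Fin n)) (p : Fin n × Fin n) : Fin n × Fin n :=
  if σ p.1 < σ p.2 then (σ p.1, σ p.2) else (σ p.2, σ p.1)

lemma srt_mem {n : ℕ} (σ : Equiv.Perm (Fin n)) {p : Fin n × Fin n} (hp : p.1 < p.2) :
    (srt σ p).1 < (srt σ p).2 := by
  unfold srt
  split_ifs with h
  · exact h
  · have hne : σ p.1 ≠ σ p.2 := fun h' => absurd (σ.injective h') (ne_of_lt hp)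
    exact lt_of_le_of_ne (le_of_not_gt h) (Ne.symm hne)

lemma srt_srt {n : ℕ} (σ : Equiv.Perm (Fin n)) {p : Fin n × Fin n} (hp : p.1 < p.2) :
    srt σ⁻¹ (srt σ p) = p := by
  unfold srt
  by_cases h : σ p.1 < σ p.2
  · rw [if_pos h]
    simp [hp]
  · rw [if_neg h]
    simp [not_lt_of_gt hp, hp]

lemma gamma_cocycle {n : ℕ} (τ σ : Equiv.Perm (Fin n)) :
    gammaP (qgen n) τ (tgen n) * gammaP (qgen n) σ (tgen n ∘ τ) =
      gammaP (qgen n) (τ * σ) (tgen n) := by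
  classical
  set q := qgen n
  set t := tgen n
  have hprod : ∀ (π : Equiv.Perm (Fin n)) (u : Fin n → Kqt n),
      gammaP q π u =
        ∏ p ∈ Finset.univ.filter (fun p : Fin n × Fin n => p.1 < p.2),
          (if π p.2 < π p.1 then fq q (u (π p.1) / u (π p.2)) else 1) := by
    intro π u
    rw [gammaP, Finset.prod_filter, Finset.prod_filter]
    refine Finset.prod_congr rfl fun p _ => ?_
    by_cases h1 : p.1 < p.2 <;> by_cases h2 : π p.2 < π p.1 <;> simp [h1, h2]
  rw [hprod τ t, hprod σ (t ∘ τ), hprod (τ * σ) t]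
  set A : Fin n × Fin n → Kqt n :=
    fun p => if τ p.2 < τ p.1 then fq q (t (τ p.1) / t (τ p.2)) else 1 with hA
  have hre : (∏ p ∈ Finset.univ.filter (fun p : Fin n × Fin n => p.1 < p.2), A p) =
      ∏ p ∈ Finset.univ.filter (fun p : Fin n × Fin n => p.1 < p.2), A (srt σ p) := by
    refine Finset.prod_nbij' (srt σ⁻¹) (srt σ) ?_ ?_ ?_ ?_ ?_
    · intro p hp
      simp only [Finset.mem_filter, Finset.mem_univ, true_and] at hp ⊢
      exact srt_mem _ hp
    · intro p hp
      simp only [Finset.mem_filter, Finset.mem_univ, true_and] at hp ⊢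
      exact srt_mem _ hp
    · intro p hp
      simp only [Finset.mem_filter, Finset.mem_univ, true_and] at hp
      exact srt_srt σ⁻¹ hp
    · intro p hp
      simp only [Finset.mem_filter, Finset.mem_univ, true_and] at hp
      exact srt_srt σ hp
    · intro p hp
      simp only [Finset.mem_filter, Finset.mem_univ, true_and] at hp
      rw [show srt σ (srt σ⁻¹ p) = p by simpa using srt_srt σ⁻¹ (p := p) hp]
  rw [hre, ← Finset.prod_mul_distrib]
  refine Finset.prod_congr rfl fun p hp => ?_
  simp only [Finset.mem_filter, Finset.mem_univ, true_and] at hp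
  have hne : σ p.1 ≠ σ p.2 := fun h => absurd (σ.injective h) (ne_of_lt hp)
  simp only [hA, srt, Equiv.Perm.coe_mul, Function.comp_apply]
  rcases lt_or_gt_of_ne hne with h1 | h1
  · rw [if_pos h1, if_neg (not_lt_of_gt h1), mul_one]; rfl
  · rw [if_neg (not_lt_of_gt h1), if_pos h1]
    have hne2 : τ (σ p.1) ≠ τ (σ p.2) := fun h => hne (τ.injective h)
    rcases lt_or_gt_of_ne hne2 with h2 | h2
    · rw [if_pos h2]
      exact (fq_mul _ _).trans (if_neg (not_lt_of_gt h2)).symm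
    · rw [if_neg (not_lt_of_gt h2)]
      exact (one_mul _).trans (if_pos h2).symm

/-- q-symmetrization of a q-symmetrization: `Sym(Sym(G)) = n!·Sym(G)`, where
`Sym(G)(t) = Σ_σ γ_σ(t)·G(t∘σ)`. -/
theorem qsym_qsym (n : ℕ) (G : (Fin n → Kqt n) → Kqt n) :
    (∑ τ : Equiv.Perm (Fin n), gammaP (qgen n) τ (tgen n) *
        ∑ σ : Equiv.Perm (Fin n), gammaP (qgen n) σ (tgen n ∘ τ) * G ((tgen n ∘ τ) ∘ σ)) =
      (n.factorial : Kqt n) *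
        ∑ σ : Equiv.Perm (Fin n), gammaP (qgen n) σ (tgen n) * G (tgen n ∘ σ) := by
  have step1 : ∀ τ : Equiv.Perm (Fin n),
      gammaP (qgen n) τ (tgen n) *
        ∑ σ : Equiv.Perm (Fin n), gammaP (qgen n) σ (tgen n ∘ τ) * G ((tgen n ∘ τ) ∘ σ) =
      ∑ σ : Equiv.Perm (Fin n), gammaP (qgen n) (τ * σ) (tgen n) * G (tgen n ∘ ⇑(τ * σ)) := by
    intro τ
    rw [Finset.mul_sum]
    refine Finset.sum_congr rfl fun σ _ => ?_
    rw [← mul_assoc, gamma_cocycle]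
    have : (tgen n ∘ ⇑τ) ∘ ⇑σ = tgen n ∘ ⇑(τ * σ) := by
      funext i
      simp [Equiv.Perm.mul_apply]
    rw [this]
  simp only [step1]
  have step2 : ∀ τ : Equiv.Perm (Fin n),
      (∑ σ : Equiv.Perm (Fin n), gammaP (qgen n) (τ * σ) (tgen n) * G (tgen n ∘ ⇑(τ * σ))) =
      ∑ ρ : Equiv.Perm (Fin n), gammaP (qgen n) ρ (tgen n) * G (tgen n ∘ ⇑ρ) := by
    intro τ
    simpa using Equiv.sum_comp (Equiv.mulLeft τ)
      (fun ρ => gammaP (qgen n) ρ (tgen n) * G (tgen n ∘ ⇑ρ))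
  simp only [step2]
  rw [Finset.sum_const, Finset.card_univ, Fintype.card_perm, Fintype.card_fin, nsmul_eq_mul]
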